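/- arXiv:0711.1680 — 2 statements merged into one kernel-verified Lean document; each statement's English description precedes it below -/
import Mathlib

section
/- Let A be an n×n matrix and X ∈ ℚ^{C(n,2)}, both with nonnegative entries. If X̂ = AᵀX̂A, then X·A^{∨2} = X. Similarly, if X̂ = AX̂Aᵀ, then A^{∨2}·Xᵀ = Xᵀ. -/
open Matrix BigOperators Filter

/-- Index set of pairs `(i,j)` with `i < j`. -/
abbrev Pairs (n : ℕ) := {p : Fin n × Fin n // p.1 < p.2}

/-- Zeon second power: matrix of 2×2 permanents. -/
def zeonSq {n : ℕ} {R : Type*} [CommRing R] (A : Matrix (Fin n) (Fin n) R) :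
    Matrix (Pairs n) (Pairs n) R :=
  Matrix.of fun I J =>
    A I.1.1 J.1.1 * A I.1.2 J.1.2 + A I.1.1 J.1.2 * A I.1.2 J.1.1

/-- `Mat(X)`: symmetric matrix with zero diagonal built from a vector indexed by pairs. -/
def matOf {n : ℕ} {R : Type*} [CommRing R] (X : Pairs n → R) :
    Matrix (Fin n) (Fin n) R :=
  Matrix.of fun i j =>
    if h : i < j then X ⟨(i, j), h⟩ else if h' : j < i then X ⟨(j, i), h'⟩ else 0

/-!
The `(a, b)` entry of `Aᵀ X̂ A` is `∑ᵢ ∑ₖ x̂_{ik} A_{ia} A_{kb}`. Since `X̂` is symmetric with zero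
diagonal, grouping the terms `(i, k)` and `(k, i)` turns it into
`∑_{i<k} x_{ik} (A_{ia} A_{kb} + A_{ka} A_{ib})`, the `(a, b)` entry of `X A^{∨2}`.
The second identity is the first one for `Aᵀ`, because `(Aᵀ)^{∨2} = (A^{∨2})ᵀ`.
-/

theorem Fintype.sum_prod_eq_sum_lt_add_swap {ι M : Type*} [Fintype ι] [LinearOrder ι]
    [AddCommMonoid M] (g : ι × ι → M) (hg : ∀ i, g (i, i) = 0) :
    ∑ p, g p = ∑ p : {p : ι × ι // p.1 < p.2}, (g p + g p.1.swap) := by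
  have hsplit : ∀ p : ι × ι,
      g p = (if p.1 < p.2 then g p else 0) + (if p.2 < p.1 then g p else 0) := by
    rintro ⟨i, j⟩
    rcases lt_trichotomy i j with h | rfl | h
    · simp [h, h.not_gt]
    · simp [hg]
    · simp [h, h.not_gt]
  have hswap : ∑ p : ι × ι, (if p.2 < p.1 then g p else 0)
      = ∑ p : ι × ι, (if p.1 < p.2 then g p.swap else 0) :=
    Fintype.sum_equiv (Equiv.prodComm ι ι) _ _ fun _ => rfl
  rw [Fintype.sum_congr _ _ hsplit, Finset.sum_add_distrib, hswap, ← Finset.sum_add_distrib]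
  simp_rw [← ite_add_zero]
  rw [← Finset.sum_filter, Finset.sum_subtype (p := fun p : ι × ι => p.1 < p.2) _ (by simp)]

section

variable {n : ℕ} {R : Type*} [CommRing R]

theorem matOf_apply_self (X : Pairs n → R) (i : Fin n) : matOf X i i = 0 := by
  simp [matOf]

theorem matOf_apply_pair (X : Pairs n → R) (I : Pairs n) : matOf X I.1.1 I.1.2 = X I := by
  simp [matOf, I.2]

theorem matOf_apply_swap (X : Pairs n → R) (I : Pairs n) : matOf X I.1.2 I.1.1 = X I := by
  simp [matOf, I.2, I.2.not_gt]

theorem dotProduct_matOf_mulVec (X : Pairs n → R) (u v : Fin n → R) :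
    u ⬝ᵥ matOf X *ᵥ v = ∑ I : Pairs n, X I * (u I.1.1 * v I.1.2 + u I.1.2 * v I.1.1) := by
  simp only [dotProduct, mulVec, Finset.mul_sum, ← Fintype.sum_prod_type']
  rw [Fintype.sum_prod_eq_sum_lt_add_swap _ (by simp [matOf_apply_self])]
  refine Finset.sum_congr rfl fun I _ => ?_
  simp only [Prod.fst_swap, Prod.snd_swap, matOf_apply_pair, matOf_apply_swap]
  ring

theorem vecMul_zeonSq_apply (A : Matrix (Fin n) (Fin n) R) (X : Pairs n → R) (J : Pairs n) :
    (X ᵥ* zeonSq A) J = (Aᵀ * matOf X * A) J.1.1 J.1.2 := by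
  rw [mul_mul_apply, dotProduct_matOf_mulVec, vecMul, dotProduct]
  refine Finset.sum_congr rfl fun I _ => ?_
  simp only [zeonSq, of_apply, transpose_apply]
  ring

theorem vecMul_zeonSq_eq_self {A : Matrix (Fin n) (Fin n) R} {X : Pairs n → R}
    (h : matOf X = Aᵀ * matOf X * A) : X ᵥ* zeonSq A = X :=
  funext fun J => by rw [vecMul_zeonSq_apply, ← h, matOf_apply_pair]

theorem zeonSq_transpose (A : Matrix (Fin n) (Fin n) R) : zeonSq Aᵀ = (zeonSq A)ᵀ := by
  ext I J
  simp only [zeonSq, transpose_apply, of_apply]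
  ring

end

theorem stmt6_general {n : ℕ} (A : Matrix (Fin n) (Fin n) ℚ) (X : Pairs n → ℚ) :
    (matOf X = Aᵀ * matOf X * A → X ᵥ* zeonSq A = X) ∧
      (matOf X = A * matOf X * Aᵀ → zeonSq A *ᵥ X = X) := by
  refine ⟨vecMul_zeonSq_eq_self, fun h => ?_⟩
  rw [← vecMul_transpose, ← zeonSq_transpose]
  exact vecMul_zeonSq_eq_self (by rwa [transpose_transpose])

theorem stmt6 {n : ℕ} (A : Matrix (Fin n) (Fin n) ℚ) (X : Pairs n → ℚ)
    (hA : ∀ i j, 0 ≤ A i j) (hX : ∀ I, 0 ≤ X I) :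
    (matOf X = Aᵀ * matOf X * A → X ᵥ* zeonSq A = X) ∧
      (matOf X = A * matOf X * Aᵀ → zeonSq A *ᵥ X = X) :=
  stmt6_general A X
end

section
/- Let A be an n×n row-stochastic matrix that is irreducible with period p > 1, with cyclic classes C₀,…,C_{p−1} (A_{ij} > 0 and i ∈ C_k implies j ∈ C_{k+1 mod p}). Define X ∈ ℚ^{C(n,2)} by x_{ij} = 1 if i and j lie in consecutive classes (i ∈ C_k and j ∈ C_{k±1 mod p}) and x_{ij} = 0 otherwise. Then A^{∨2}·Xᵀ = Xᵀ; in particular det(I − A^{∨2}) = 0. -/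
/-!
A positive entry `A i j` moves the class index up by one, so a product `A i₁ j * A i₂ k` is
nonzero only when `(c j, c k) = (c i₁ + 1, c i₂ + 1)`, and then `x_{jk} = x_{i₁i₂}`.
Expanding `(A^{∨2} X)_{i₁i₂}` as a double sum over ordered pairs `(j, k)` (possible because
`x` is symmetric with zero diagonal), row-stochasticity gives `x_{i₁i₂}` back. Any positive
entry `A i j` exhibits consecutive `i, j`, so `X ≠ 0` and `1` is an eigenvalue of `A^{∨2}`.
-/

open Matrix BigOperators Filter

lemma sum_pairs_add_swap {n : ℕ} {M : Type*} [AddCommMonoid M] (f : Fin n → Fin n → M)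
    (hdiag : ∀ j, f j j = 0) :
    ∑ J : Pairs n, (f J.1.1 J.1.2 + f J.1.2 J.1.1) = ∑ j, ∑ k, f j k := by
  have hsplit : ∀ x : Fin n × Fin n,
      (if x.1 < x.2 then f x.1 x.2 else 0) + (if x.2 < x.1 then f x.1 x.2 else 0) = f x.1 x.2 := by
    rintro ⟨j, k⟩
    rcases lt_trichotomy j k with h | rfl | h
    · simp [h, h.not_gt]
    · simp [hdiag]
    · simp [h, h.not_gt]
  have hswap : ∑ x : Fin n × Fin n, (if x.1 < x.2 then f x.2 x.1 else 0)
      = ∑ x : Fin n × Fin n, (if x.2 < x.1 then f x.1 x.2 else 0) :=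
    Fintype.sum_equiv (Equiv.prodComm _ _) _ _ fun _ => rfl
  calc ∑ J : Pairs n, (f J.1.1 J.1.2 + f J.1.2 J.1.1)
      = ∑ x : Fin n × Fin n, if x.1 < x.2 then f x.1 x.2 + f x.2 x.1 else 0 := by
        rw [← Finset.sum_filter]
        exact (Finset.sum_subtype (p := fun x : Fin n × Fin n => x.1 < x.2) _ (by simp)
          (fun x => f x.1 x.2 + f x.2 x.1)).symm
    _ = ∑ x : Fin n × Fin n, f x.1 x.2 := by
        simp only [ite_add_zero, Finset.sum_add_distrib, hswap]
        rw [← Finset.sum_add_distrib]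
        exact Finset.sum_congr rfl fun x _ => hsplit x
    _ = ∑ j, ∑ k, f j k := Fintype.sum_prod_type _

lemma zeonSq_mulVec_apply {n : ℕ} {R : Type*} [CommRing R] (A : Matrix (Fin n) (Fin n) R)
    (F : Fin n → Fin n → R) (hsymm : ∀ j k, F j k = F k j) (hdiag : ∀ j, F j j = 0)
    (I : Pairs n) :
    (zeonSq A *ᵥ fun J => F J.1.1 J.1.2) I = ∑ j, ∑ k, A I.1.1 j * A I.1.2 k * F j k := by
  rw [← sum_pairs_add_swap _ fun j => by rw [hdiag, mul_zero]]
  refine Finset.sum_congr rfl fun J _ => ?_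
  simp only [zeonSq, of_apply, hsymm J.1.2 J.1.1]
  ring

lemma sum_sum_mul_mul_eq_of_rowSum_eq_one {ι R : Type*} [Fintype ι] [CommRing R]
    (A : Matrix ι ι R) (hA : ∀ i, ∑ j, A i j = 1) (F : ι → ι → R) (i i' : ι)
    (hF : ∀ j k, A i j ≠ 0 → A i' k ≠ 0 → F j k = F i i') :
    ∑ j, ∑ k, A i j * A i' k * F j k = F i i' := by
  have hconst : ∀ j k, A i j * A i' k * F j k = A i j * A i' k * F i i' := by
    intro j k
    by_cases hj : A i j = 0
    · simp [hj]
    by_cases hk : A i' k = 0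
    · simp [hk]
    rw [hF j k hj hk]
  simp only [hconst, ← Finset.sum_mul, ← Finset.mul_sum, hA, one_mul]

def consecutiveIndicator {ι : Type*} {p : ℕ} (c : ι → ZMod p) (j k : ι) : ℚ :=
  if c k = c j + 1 ∨ c j = c k + 1 then 1 else 0

section consecutiveIndicator

variable {ι : Type*} {p : ℕ} (c : ι → ZMod p)

lemma consecutiveIndicator_comm (j k : ι) :
    consecutiveIndicator c j k = consecutiveIndicator c k j := by
  simp only [consecutiveIndicator, or_comm]

lemma consecutiveIndicator_self [Fact (1 < p)] (j : ι) : consecutiveIndicator c j j = 0 :=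
  if_neg fun h => by simpa using h.elim id id

lemma consecutiveIndicator_succ {i i' j k : ι} (hj : c j = c i + 1) (hk : c k = c i' + 1) :
    consecutiveIndicator c j k = consecutiveIndicator c i i' := by
  simp only [consecutiveIndicator, hj, hk, add_left_inj]

end consecutiveIndicator

lemma det_one_sub_eq_zero_of_mulVec_eq_self {m R : Type*} [Fintype m] [DecidableEq m]
    [CommRing R] [IsDomain R] {M : Matrix m m R} {v : m → R} (hv : v ≠ 0) (hMv : M *ᵥ v = v) :
    (1 - M).det = 0 :=
  exists_mulVec_eq_zero_iff.mp ⟨v, hv, by rw [sub_mulVec, one_mulVec, hMv, sub_self]⟩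

lemma exists_pos_of_rowSum_eq_one {ι R : Type*} [Fintype ι] [AddCommMonoid R] [One R]
    [NeZero (1 : R)] [PartialOrder R] (A : Matrix ι ι R)
    (hA0 : ∀ i j, 0 ≤ A i j) (hA1 : ∀ i, ∑ j, A i j = 1) (i : ι) : ∃ j, 0 < A i j := by
  obtain ⟨j, -, hj⟩ := Finset.exists_ne_zero_of_sum_ne_zero (s := Finset.univ) (f := A i)
    (by rw [hA1]; exact one_ne_zero)
  exact ⟨j, (hA0 i j).lt_of_ne' hj⟩

lemma pairs_vec_ne_zero {n : ℕ} {M : Type*} [Zero M] (F : Fin n → Fin n → M)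
    (hsymm : ∀ j k, F j k = F k j) (hdiag : ∀ j, F j j = 0) {i j : Fin n} (hF : F i j ≠ 0) :
    (fun J : Pairs n => F J.1.1 J.1.2) ≠ 0 := by
  intro h
  have hij : i ≠ j := by
    rintro rfl
    exact hF (hdiag i)
  rcases hij.lt_or_gt with hlt | hgt
  · exact hF (congr_fun h ⟨(i, j), hlt⟩)
  · exact hF (hsymm i j ▸ congr_fun h ⟨(j, i), hgt⟩)

theorem stmt15_general {n p : ℕ} (hn : 0 < n) (hp : 1 < p)
    (A : Matrix (Fin n) (Fin n) ℚ)
    (hA0 : ∀ i j, 0 ≤ A i j) (hA1 : ∀ i, ∑ j, A i j = 1)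
    (c : Fin n → ZMod p)
    (hcyc : ∀ i j, 0 < A i j → c j = c i + 1)
    (X : Pairs n → ℚ)
    (hX : ∀ I : Pairs n,
      X I = if c I.1.2 = c I.1.1 + 1 ∨ c I.1.1 = c I.1.2 + 1 then 1 else 0) :
    zeonSq A *ᵥ X = X ∧ (1 - zeonSq A).det = 0 := by
  have : Fact (1 < p) := ⟨hp⟩
  have hXF : X = fun J => consecutiveIndicator c J.1.1 J.1.2 := funext hX
  have hpos : ∀ i j, A i j ≠ 0 → c j = c i + 1 := fun i j h => hcyc i j ((hA0 i j).lt_of_ne' h)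
  have hfix : zeonSq A *ᵥ X = X := by
    subst hXF
    funext I
    rw [zeonSq_mulVec_apply _ _ (consecutiveIndicator_comm c) (consecutiveIndicator_self c)]
    exact sum_sum_mul_mul_eq_of_rowSum_eq_one A hA1 _ _ _ fun j k hj hk =>
      consecutiveIndicator_succ c (hpos _ _ hj) (hpos _ _ hk)
  obtain ⟨j, hj⟩ := exists_pos_of_rowSum_eq_one A hA0 hA1 ⟨0, hn⟩
  have hXne : X ≠ 0 := by
    rw [hXF]
    refine pairs_vec_ne_zero _ (consecutiveIndicator_comm c) (consecutiveIndicator_self c)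
      (i := ⟨0, hn⟩) (j := j) ?_
    simp [consecutiveIndicator, hcyc _ _ hj]
  exact ⟨hfix, det_one_sub_eq_zero_of_mulVec_eq_self hXne hfix⟩

theorem stmt15 {n p : ℕ} (hn : 0 < n) (hp : 1 < p)
    (A : Matrix (Fin n) (Fin n) ℚ)
    (hA0 : ∀ i j, 0 ≤ A i j) (hA1 : ∀ i, ∑ j, A i j = 1)
    (hirr : ∀ i j, ∃ m, 0 < (A ^ m) i j)
    (c : Fin n → ZMod p)
    (hcyc : ∀ i j, 0 < A i j → c j = c i + 1)
    (X : Pairs n → ℚ)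
    (hX : ∀ I : Pairs n,
      X I = if c I.1.2 = c I.1.1 + 1 ∨ c I.1.1 = c I.1.2 + 1 then 1 else 0) :
    zeonSq A *ᵥ X = X ∧ (1 - zeonSq A).det = 0 :=
  stmt15_general hn hp A hA0 hA1 c hcyc X hX
end
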